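/- arXiv:1503.08251 — 3 statements merged into one kernel-verified Lean document; each statement's English description precedes it below -/
import Mathlib

section
/- Let V = (ZMod (2s+1)) × (ZMod 3) with s ≥ 1. The Bose triple system B(s), consisting of all vertical triples {(x,0),(x,1),(x,2)} and all slanted triples {(x₁,y),(x₂,y),((x₁+x₂)/2, y+1)} for x₁ ≠ x₂ (where division by 2 means multiplication by s+1 in ZMod (2s+1)), is a Steiner triple system on V. -/
/-- The Bose triple system `B(s)` on `V = ZMod (2s+1) × ZMod 3` (`s ≥ 1`), consisting of
the vertical triples `{(x,0),(x,1),(x,2)}` and the slanted triples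
`{(x₁,y),(x₂,y),((s+1)(x₁+x₂), y+1)}` for `x₁ ≠ x₂` (multiplication by `s+1` is division
by 2 in `ZMod (2s+1)`), is a Steiner triple system on `V`. -/
theorem bose_sts (s : ℕ) (hs : 1 ≤ s)
    (B : Set (Finset (ZMod (2 * s + 1) × ZMod 3)))
    (hB : B = {t | (∃ x : ZMod (2 * s + 1), t = {(x, 0), (x, 1), (x, 2)}) ∨
      (∃ x₁ x₂ : ZMod (2 * s + 1), ∃ y : ZMod 3, x₁ ≠ x₂ ∧
        t = {(x₁, y), (x₂, y), (((s : ZMod (2 * s + 1)) + 1) * (x₁ + x₂), y + 1)})}) :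
    (∀ t ∈ B, t.card = 3) ∧
      ∀ p q : ZMod (2 * s + 1) × ZMod 3, p ≠ q →
        ∃! t, t ∈ B ∧ p ∈ t ∧ q ∈ t := by
  have hself : ((2 * s + 1 : ℕ) : ZMod (2 * s + 1)) = 0 := ZMod.natCast_self _
  set c : ZMod (2 * s + 1) := (s : ZMod (2 * s + 1)) + 1 with hcdef
  have hc : (2 : ZMod (2 * s + 1)) * c = 1 := by
    rw [hcdef]
    push_cast at hself
    linear_combination hself
  have h2inj : ∀ x y : ZMod (2 * s + 1), 2 * x = 2 * y → x = y := by
    intro x y h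
    linear_combination c * h - (x - y) * hc
  have hz3 : ∀ z : ZMod 3, z = 0 ∨ z = 1 ∨ z = 2 := by decide
  have hy1 : ∀ z : ZMod 3, z ≠ z + 1 := by decide
  have hy2 : ∀ z : ZMod 3, z ≠ z + 1 + 1 := by decide
  have h3tr : ∀ i j : ZMod 3, i = j ∨ j = i + 1 ∨ i = j + 1 := by decide
  have hBmem : ∀ t : Finset (ZMod (2 * s + 1) × ZMod 3), t ∈ B ↔
      ((∃ x : ZMod (2 * s + 1), t = {(x, 0), (x, 1), (x, 2)}) ∨
      (∃ x₁ x₂ : ZMod (2 * s + 1), ∃ y : ZMod 3, x₁ ≠ x₂ ∧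
        t = {(x₁, y), (x₂, y), (c * (x₁ + x₂), y + 1)})) := by
    intro t; rw [hB]; exact Iff.rfl
  have memv : ∀ (p : ZMod (2 * s + 1) × ZMod 3) (x : ZMod (2 * s + 1)),
      p ∈ ({(x, 0), (x, 1), (x, 2)} : Finset (ZMod (2 * s + 1) × ZMod 3)) ↔ p.1 = x := by
    rintro ⟨a, i⟩ x
    simp only [Finset.mem_insert, Finset.mem_singleton, Prod.mk.injEq]
    constructor
    · rintro (⟨h, -⟩ | ⟨h, -⟩ | ⟨h, -⟩) <;> exact h
    · rintro rfl
      rcases hz3 i with h | h | h <;> subst h <;> simp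
  have mems : ∀ (p : ZMod (2 * s + 1) × ZMod 3) (x₁ x₂ : ZMod (2 * s + 1)) (y : ZMod 3),
      p ∈ ({(x₁, y), (x₂, y), (c * (x₁ + x₂), y + 1)} :
          Finset (ZMod (2 * s + 1) × ZMod 3)) ↔
        (p.1 = x₁ ∧ p.2 = y) ∨ (p.1 = x₂ ∧ p.2 = y) ∨
          (p.1 = c * (x₁ + x₂) ∧ p.2 = y + 1) := by
    rintro ⟨a, i⟩ x₁ x₂ y
    simp only [Finset.mem_insert, Finset.mem_singleton, Prod.mk.injEq]
  constructor
  · intro t ht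
    rw [hBmem] at ht
    rcases ht with ⟨x, rfl⟩ | ⟨x₁, x₂, y, hx, rfl⟩
    · rw [Finset.card_insert_of_notMem (by
        simp [Prod.ext_iff, show (0 : ZMod 3) ≠ 1 by decide, show (0 : ZMod 3) ≠ 2 by decide]),
        Finset.card_insert_of_notMem (by
        simp [Prod.ext_iff, show (1 : ZMod 3) ≠ 2 by decide]), Finset.card_singleton]
    · rw [Finset.card_insert_of_notMem (by simp [Prod.ext_iff, hx, hy1 y]),
        Finset.card_insert_of_notMem (by simp [Prod.ext_iff, hy1 y]), Finset.card_singleton]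
  · have vert : ∀ (a : ZMod (2 * s + 1)) (i j : ZMod 3), i ≠ j →
        ∃! t, t ∈ B ∧ (a, i) ∈ t ∧ (a, j) ∈ t := by
      intro a i j hij
      refine ⟨{(a, 0), (a, 1), (a, 2)}, ⟨(hBmem _).2 (Or.inl ⟨a, rfl⟩),
        (memv _ _).2 rfl, (memv _ _).2 rfl⟩, ?_⟩
      rintro t ⟨ht, hp, hq⟩
      rw [hBmem] at ht
      rcases ht with ⟨x, rfl⟩ | ⟨x₁, x₂, y, hx, rfl⟩
      · rw [memv] at hp; rw [← hp]
      · rw [mems] at hp hq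
        dsimp only at hp hq
        rcases hp with ⟨h1, h2⟩ | ⟨h1, h2⟩ | ⟨h1, h2⟩ <;>
          rcases hq with ⟨h3, h4⟩ | ⟨h3, h4⟩ | ⟨h3, h4⟩
        · exact absurd (h2.trans h4.symm) hij
        · exact absurd (h1.symm.trans h3) hx
        · exact absurd (by linear_combination (-2) * h1 + 2 * h3 + (x₁ + x₂) * hc) hx
        · exact absurd (h3.symm.trans h1) hx
        · exact absurd (h2.trans h4.symm) hij
        · exact absurd (by linear_combination 2 * h1 - 2 * h3 - (x₁ + x₂) * hc) hx
        · exact absurd (by linear_combination (-2) * h3 + 2 * h1 + (x₁ + x₂) * hc) hx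
        · exact absurd (by linear_combination 2 * h3 - 2 * h1 - (x₁ + x₂) * hc) hx
        · exact absurd (h2.trans h4.symm) hij
    have same : ∀ (a b : ZMod (2 * s + 1)) (i : ZMod 3), a ≠ b →
        ∃! t, t ∈ B ∧ (a, i) ∈ t ∧ (b, i) ∈ t := by
      intro a b i hab
      refine ⟨{(a, i), (b, i), (c * (a + b), i + 1)},
        ⟨(hBmem _).2 (Or.inr ⟨a, b, i, hab, rfl⟩),
        (mems _ _ _ _).2 (Or.inl ⟨rfl, rfl⟩),
        (mems _ _ _ _).2 (Or.inr (Or.inl ⟨rfl, rfl⟩))⟩, ?_⟩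
      rintro t ⟨ht, hp, hq⟩
      rw [hBmem] at ht
      rcases ht with ⟨x, rfl⟩ | ⟨x₁, x₂, y, hx, rfl⟩
      · rw [memv] at hp hq
        exact absurd (hp.trans hq.symm) hab
      · rw [mems] at hp hq
        dsimp only at hp hq
        rcases hp with ⟨h1, h2⟩ | ⟨h1, h2⟩ | ⟨h1, h2⟩ <;>
          rcases hq with ⟨h3, h4⟩ | ⟨h3, h4⟩ | ⟨h3, h4⟩
        · exact absurd (h1.trans h3.symm) hab
        · subst h1; subst h3; subst h2; rfl
        · exact absurd (h2.symm.trans h4) (hy1 y)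
        · rw [h1, h3, h2, Finset.insert_comm, add_comm x₂ x₁]
        · exact absurd (h1.trans h3.symm) hab
        · exact absurd (h2.symm.trans h4) (hy1 y)
        · exact absurd (h4.symm.trans h2) (hy1 y)
        · exact absurd (h4.symm.trans h2) (hy1 y)
        · exact absurd (h1.trans h3.symm) hab
    have main : ∀ (a b : ZMod (2 * s + 1)) (i j : ZMod 3), a ≠ b → j = i + 1 →
        ∃! t, t ∈ B ∧ (a, i) ∈ t ∧ (b, j) ∈ t := by
      intro a b i j hab hij
      have hne : a ≠ 2 * b - a := by
        intro h; exact hab (h2inj a b (by linear_combination h))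
      have happ : c * (a + (2 * b - a)) = b := by linear_combination b * hc
      refine ⟨{(a, i), (2 * b - a, i), (c * (a + (2 * b - a)), i + 1)},
        ⟨(hBmem _).2 (Or.inr ⟨a, 2 * b - a, i, hne, rfl⟩),
        (mems _ _ _ _).2 (Or.inl ⟨rfl, rfl⟩),
        (mems _ _ _ _).2 (Or.inr (Or.inr ⟨happ.symm, hij⟩))⟩, ?_⟩
      rintro t ⟨ht, hp, hq⟩
      rw [hBmem] at ht
      rcases ht with ⟨x, rfl⟩ | ⟨x₁, x₂, y, hx, rfl⟩
      · rw [memv] at hp hq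
        exact absurd (hp.trans hq.symm) hab
      · rw [mems] at hp hq
        dsimp only at hp hq
        rcases hp with ⟨h1, h2⟩ | ⟨h1, h2⟩ | ⟨h1, h2⟩ <;>
          rcases hq with ⟨h3, h4⟩ | ⟨h3, h4⟩ | ⟨h3, h4⟩
        · exact absurd (h1.trans h3.symm) hab
        · exact absurd ((h2.trans h4.symm).trans hij) (hy1 i)
        · have hx2 : x₂ = 2 * b - a := by
            linear_combination (-2) * h3 - (x₁ + x₂) * hc + h1
          rw [hx2, ← h1, ← h2]
        · exact absurd ((h2.trans h4.symm).trans hij) (hy1 i)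
        · exact absurd (h1.trans h3.symm) hab
        · have hx1 : x₁ = 2 * b - a := by
            linear_combination (-2) * h3 - (x₁ + x₂) * hc + h1
          rw [hx1, ← h1, ← h2, Finset.insert_comm, add_comm (2 * b - a) a]
        · exact absurd ((h4.symm.trans hij).trans (congrArg (· + 1) h2)) (hy2 y)
        · exact absurd ((h4.symm.trans hij).trans (congrArg (· + 1) h2)) (hy2 y)
        · exact absurd ((h2.trans h4.symm).trans hij) (hy1 i)
    rintro ⟨a, i⟩ ⟨b, j⟩ hpq
    rcases eq_or_ne a b with rfl | hab
    · have hij : i ≠ j := fun h => hpq (by rw [h])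
      exact vert a i j hij
    · rcases h3tr i j with rfl | hij | hij
      · exact same a b i hab
      · exact main a b i j hab hij
      · obtain ⟨t, ⟨ht1, ht2, ht3⟩, hu⟩ := main b a j i (Ne.symm hab) hij
        exact ⟨t, ⟨ht1, ht3, ht2⟩, fun t' h' => hu t' ⟨h'.1, h'.2.2, h'.2.1⟩⟩
end

section
/- Let G be a group, A ≤ H ≤ G, and suppose every G-conjugate of A contained in H is H-conjugate to A, and moreover N_G(A) ≤ N_G(H). Then the map N_H(A) x N_H(A) ↦ H x H from double cosets N_H(A)\N_G(A)/N_H(A) to double cosets H\G/H is injective (onto the set of double cosets HgH with H ∩ H^g containing an H-conjugate of A). -/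
/-!
Write `g₂ = h₁ g₁ h₂` with `hᵢ ∈ H`. Since `g₂` normalizes `A`, `A^(h₁ g₁) = A^(h₂⁻¹) ≤ H`, so
`A^(h₁ g₁) = A^h` for some `h ∈ H`, i.e. `n := h₁ g₁ h⁻¹ ∈ N_G(A)`. Then
`g₂ = (n g₁⁻¹) g₁ (h h₂)`, where `n g₁⁻¹ = h₁ (g₁ h⁻¹ g₁⁻¹)` lies in `H` because `g₁` normalizes `H`,
and `h h₂ = n⁻¹ g₂` lies in `N_G(A)`.
-/

/-- The conjugate subgroup `A^g = g⁻¹ A g`. -/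
def conjSub {G : Type*} [Group G] (g : G) (A : Subgroup G) : Subgroup G :=
  A.map (MulAut.conj g⁻¹).toMonoidHom

section ConjSub

variable {G : Type*} [Group G]

theorem conjSub_mul (x y : G) (A : Subgroup G) : conjSub (x * y) A = conjSub y (conjSub x A) := by
  simp only [conjSub, Subgroup.map_map, mul_inv_rev, map_mul]
  rfl

theorem conjSub_one (A : Subgroup G) : conjSub 1 A = A := by
  simp only [conjSub, inv_one, map_one]
  exact Subgroup.map_id A

theorem conjSub_eq_self_iff {g : G} {A : Subgroup G} :
    conjSub g A = A ↔ g ∈ Subgroup.normalizer (A : Set G) := by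
  rw [← inv_mem_iff, Subgroup.mem_normalizer_iff_map_conj_eq]
  rfl

theorem conjSub_le_of_mem {A H : Subgroup G} (hAH : A ≤ H) {h : G} (hh : h ∈ H) :
    conjSub h A ≤ H :=
  calc conjSub h A ≤ conjSub h H := Subgroup.map_mono hAH
    _ = H := conjSub_eq_self_iff.mpr (Subgroup.le_normalizer hh)

theorem mul_inv_mem_normalizer_of_conjSub_eq {x y : G} {A : Subgroup G}
    (h : conjSub x A = conjSub y A) : x * y⁻¹ ∈ Subgroup.normalizer (A : Set G) := by
  rw [← conjSub_eq_self_iff, conjSub_mul, h, ← conjSub_mul, mul_inv_cancel, conjSub_one]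

end ConjSub

/-- Let `A ≤ H ≤ G`.  Suppose every `G`-conjugate of `A` contained in `H` is
`H`-conjugate to `A`, and every element normalizing `A` normalizes `H`.  Then the map
`N_H(A) g N_H(A) ↦ H g H` from double cosets of `N_H(A)` in `N_G(A)` to double cosets
of `H` in `G` is injective: if `g₁, g₂ ∈ N_G(A)` lie in the same double coset of `H`,
they lie in the same double coset of `N_H(A) = H ⊓ N_G(A)`. -/
theorem double_coset_map_injective (G : Type*) [Group G] (H A : Subgroup G)
    (hAH : A ≤ H)
    (hconj : ∀ g : G, conjSub g A ≤ H → ∃ h ∈ H, conjSub g A = conjSub h A)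
    (hnorm : Subgroup.normalizer (A : Set G) ≤ Subgroup.normalizer (H : Set G))
    (g₁ g₂ : G) (hg₁ : g₁ ∈ Subgroup.normalizer (A : Set G)) (hg₂ : g₂ ∈ Subgroup.normalizer (A : Set G))
    (hHH : ∃ h₁ ∈ H, ∃ h₂ ∈ H, g₂ = h₁ * g₁ * h₂) :
    ∃ m₁ ∈ H ⊓ Subgroup.normalizer (A : Set G), ∃ m₂ ∈ H ⊓ Subgroup.normalizer (A : Set G), g₂ = m₁ * g₁ * m₂ := by
  set N := Subgroup.normalizer (A : Set G)
  obtain ⟨h₁, hh₁, h₂, hh₂, rfl⟩ := hHH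
  have hle : conjSub (h₁ * g₁) A ≤ H := by
    rw [show h₁ * g₁ = (h₁ * g₁ * h₂) * h₂⁻¹ by group, conjSub_mul, conjSub_eq_self_iff.mpr hg₂]
    exact conjSub_le_of_mem hAH (H.inv_mem hh₂)
  obtain ⟨h, hh, heq⟩ := hconj (h₁ * g₁) hle
  have hn : h₁ * g₁ * h⁻¹ ∈ N := mul_inv_mem_normalizer_of_conjSub_eq heq
  refine ⟨h₁ * g₁ * h⁻¹ * g₁⁻¹, ⟨?_, N.mul_mem hn (N.inv_mem hg₁)⟩, h * h₂, ⟨H.mul_mem hh hh₂, ?_⟩,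
    by group⟩
  · have hconjH : g₁ * h⁻¹ * g₁⁻¹ ∈ H :=
      (Subgroup.mem_normalizer_iff.mp (hnorm hg₁) _).mp (H.inv_mem hh)
    rw [show h₁ * g₁ * h⁻¹ * g₁⁻¹ = h₁ * (g₁ * h⁻¹ * g₁⁻¹) by group]
    exact H.mul_mem hh₁ hconjH
  · rw [show h * h₂ = (h₁ * g₁ * h⁻¹)⁻¹ * (h₁ * g₁ * h₂) by group]
    exact N.mul_mem (N.inv_mem hn) hg₂
end

section
/- Let T be a permutation of F_N (N = 2^d) fixing 0, and let U be an F_2-linear subspace of F_N with 1 < dim U < d whose image T(U) is again a linear subspace. Then T is not transversal to PG(N): there exist distinct nonzero x, y ∈ T(U) such that the orbit of y under σ(x,T) is contained in T(U) \ {0,x} and hence has size at most |U| - 2 < 2^{d-1} - 1. -/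
/-- Let `F` be the field with `2^d` elements, `T` a permutation of `F` fixing `0`, and
`U` an `F₂`-linear subspace (equivalently, in characteristic 2, an additive subgroup)
with `1 < dim U < d` (i.e. `2 < |U| < 2^d`) whose image `T(U)` is again a subspace.
Then `T` is not transversal to `PG(2^d)`: there are distinct nonzero `x, y ∈ T(U)` such
that the orbit of `y` under `σ(x,T) : w ↦ T(T⁻¹ w + T⁻¹ x) + x` is contained in
`T(U) \ {0, x}`, hence has size at most `|U| - 2 < 2^(d-1) - 1`. -/
theorem subspace_image_obstructs_transversal (F : Type*) [Field F] [Fintype F] (d : ℕ)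
    (hchar : ringChar F = 2) (hcard : Fintype.card F = 2 ^ d)
    (T : Equiv.Perm F) (hT0 : T 0 = 0)
    (U : AddSubgroup F) (hUlow : 2 < Nat.card U) (hUhigh : Nat.card U < 2 ^ d)
    (W : AddSubgroup F) (hW : (W : Set F) = T '' (U : Set F)) :
    ∃ x y : F, x ≠ 0 ∧ y ≠ 0 ∧ x ≠ y ∧ x ∈ T '' (U : Set F) ∧ y ∈ T '' (U : Set F) ∧
      {z : F | ∃ n : ℕ, (fun w => T (T.symm w + T.symm x) + x)^[n] y = z}
        ⊆ (T '' (U : Set F)) \ {0, x} ∧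
      Nat.card {z : F | ∃ n : ℕ, (fun w => T (T.symm w + T.symm x) + x)^[n] y = z}
        ≤ Nat.card U - 2 ∧
      Nat.card U - 2 < 2 ^ (d - 1) - 1 := by
  haveI : CharP F 2 := hchar ▸ ringChar.charP F
  have hTsymm0 : T.symm 0 = 0 := by
    exact (Equiv.symm_apply_eq T).2 hT0.symm
  -- cardinalities
  have hcardW : ((W : Set F)).ncard = Nat.card U := by
    rw [hW, Set.ncard_image_of_injective _ T.injective, ← Nat.card_coe_set_eq]
    rfl
  -- membership in U of preimages
  have hpre : ∀ w ∈ W, T.symm w ∈ U := by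
    intro w hw
    rw [← SetLike.mem_coe, hW] at hw
    obtain ⟨u, hu, rfl⟩ := hw
    rwa [Equiv.symm_apply_apply]
  -- pick x ≠ y nonzero in W
  have h1 : 1 < ((W : Set F) \ {0}).ncard := by
    have h0W : (0 : F) ∈ (W : Set F) := W.zero_mem
    rw [Set.ncard_diff_singleton_of_mem h0W, hcardW]
    omega
  obtain ⟨x, y, hx, hy, hxy⟩ := (Set.one_lt_ncard_iff).1 h1
  obtain ⟨hxW, hx0⟩ := hx
  obtain ⟨hyW, hy0⟩ := hy
  simp only [Set.mem_singleton_iff] at hx0 hy0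
  have hx0 : x ≠ 0 := hx0
  have hy0 : y ≠ 0 := hy0
  have hxWm : x ∈ W := hxW
  have hyWm : y ∈ W := hyW
  -- the step map preserves W \ {0, x}
  have step : ∀ w, w ∈ W → w ≠ 0 → w ≠ x →
      (T (T.symm w + T.symm x) + x) ∈ W ∧
      (T (T.symm w + T.symm x) + x) ≠ 0 ∧ (T (T.symm w + T.symm x) + x) ≠ x := by
    intro w hwW hw0 hwx
    have hu : T.symm w + T.symm x ∈ U := (U.add_mem (hpre w hwW) (hpre x hxWm))
    have hTin : T (T.symm w + T.symm x) ∈ W := by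
      rw [← SetLike.mem_coe, hW]; exact ⟨_, hu, rfl⟩
    refine ⟨W.add_mem hTin hxWm, ?_, ?_⟩
    · intro h
      have : T (T.symm w + T.symm x) = x := by
        have := congrArg (· + x) h
        simpa [add_assoc, CharTwo.add_self_eq_zero] using this
      have h2 : T.symm w + T.symm x = T.symm x := by
        have := congrArg T.symm this
        rwa [Equiv.symm_apply_apply] at this
      have : T.symm w = 0 := by
        have := congrArg (· + T.symm x) h2
        simpa [add_assoc, CharTwo.add_self_eq_zero] using this
      exact hw0 (by rw [← Equiv.apply_symm_apply T w, this, hT0])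
    · intro h
      have : T (T.symm w + T.symm x) = 0 := by
        have := congrArg (· + x) h
        simpa [add_assoc, CharTwo.add_self_eq_zero] using this
      have h2 : T.symm w + T.symm x = 0 := by
        have := congrArg T.symm this
        rwa [Equiv.symm_apply_apply, hTsymm0] at this
      have h3 : T.symm w = T.symm x := by
        have := congrArg (· + T.symm x) h2
        simpa [add_assoc, CharTwo.add_self_eq_zero] using this
      exact hwx (by rw [← Equiv.apply_symm_apply T w, h3, Equiv.apply_symm_apply])
  -- orbit invariance
  have orbit : ∀ n : ℕ, ((fun w => T (T.symm w + T.symm x) + x)^[n] y) ∈ W ∧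
      ((fun w => T (T.symm w + T.symm x) + x)^[n] y) ≠ 0 ∧
      ((fun w => T (T.symm w + T.symm x) + x)^[n] y) ≠ x := by
    intro n
    induction n with
    | zero => exact ⟨hyWm, hy0, fun h => hxy h.symm⟩
    | succ n ih =>
      rw [Function.iterate_succ_apply']
      exact step _ ih.1 ih.2.1 ih.2.2
  have hsub : {z : F | ∃ n : ℕ, (fun w => T (T.symm w + T.symm x) + x)^[n] y = z}
      ⊆ (T '' (U : Set F)) \ {0, x} := by
    rintro z ⟨n, rfl⟩
    obtain ⟨h1, h2, h3⟩ := orbit n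
    refine ⟨?_, ?_⟩
    · rw [← hW]; exact h1
    · simp only [Set.mem_insert_iff, Set.mem_singleton_iff, not_or]
      exact ⟨h2, h3⟩
  -- cardinality of W minus two points
  have hpairsub : ({0, x} : Set F) ⊆ (T '' (U : Set F)) := by
    rw [← hW]
    rintro z (rfl | rfl)
    · exact W.zero_mem
    · exact hxWm
  have hdiff : ((T '' (U : Set F)) \ {0, x}).ncard = Nat.card U - 2 := by
    rw [Set.ncard_diff hpairsub, Set.ncard_pair (Ne.symm hx0), ← hW, hcardW]
  have hcardle : Nat.card {z : F | ∃ n : ℕ, (fun w => T (T.symm w + T.symm x) + x)^[n] y = z}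
      ≤ Nat.card U - 2 := by
    rw [Nat.card_coe_set_eq, ← hdiff]
    exact Set.ncard_le_ncard hsub (Set.toFinite _)
  -- |U| ≤ 2^(d-1)
  have hdvd : Nat.card U ∣ 2 ^ d := by
    rw [← hcard, ← Nat.card_eq_fintype_card]
    exact AddSubgroup.card_addSubgroup_dvd_card U
  obtain ⟨k, hk, hkeq⟩ := (Nat.dvd_prime_pow Nat.prime_two).1 hdvd
  have hkd : k ≤ d - 1 := by
    rcases Nat.lt_or_ge k d with h | h
    · omega
    · exfalso; rw [hkeq] at hUhigh
      exact absurd hUhigh (not_lt.2 (Nat.pow_le_pow_right (by norm_num) h))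
  have hUle : Nat.card U ≤ 2 ^ (d - 1) := by
    rw [hkeq]; exact Nat.pow_le_pow_right (by norm_num) hkd
  have hfin : Nat.card U - 2 < 2 ^ (d - 1) - 1 := by omega
  refine ⟨x, y, hx0, hy0, fun h => hxy h, ?_, ?_, hsub, hcardle, hfin⟩
  · rw [← hW]; exact hxWm
  · rw [← hW]; exact hyWm
end
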